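/- Let m, n be natural numbers, P an n×m real matrix, and Z an n×n real matrix, and let U = fromBlocks 1 Pᵀ P Z be the (m+n)×(m+n) block matrix with identity m×m top-left block. Then Matrix.rank U ≤ m if and only if Z = P * Pᵀ. -/

import Mathlib

/-!
Eliminating the off-diagonal blocks against the identity block factors `fromBlocks 1 Pᵀ P Z` as
`L * fromBlocks 1 0 0 (Z - P * Pᵀ) * Lᵀ` with `L` block unitriangular, so its rank is
`m + rank (Z - P * Pᵀ)`, which is at most `m` exactly when the Schur complement vanishes.
-/

open Matrix Module

theorem Submodule.finrank_prod {K M N : Type*} [DivisionRing K] [AddCommGroup M] [Module K M]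
    [AddCommGroup N] [Module K N] [FiniteDimensional K M] [FiniteDimensional K N]
    (p : Submodule K M) (q : Submodule K N) :
    finrank K (p.prod q) = finrank K p + finrank K q := by
  have h : p.prod q = LinearMap.range (p.subtype.prodMap q.subtype) := by
    rw [LinearMap.range_prodMap, p.range_subtype, q.range_subtype]
  rw [h, LinearMap.finrank_range_of_inj, Module.finrank_prod]
  exact Prod.map_injective.mpr ⟨p.injective_subtype, q.injective_subtype⟩

namespace Matrix

theorem rank_eq_zero_iff {K m n : Type*} [Field K] [Fintype n] (A : Matrix m n K) :
    A.rank = 0 ↔ A = 0 := by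
  classical
  rw [rank, Submodule.finrank_eq_zero, LinearMap.range_eq_bot, ← toLin'_apply',
    LinearEquiv.map_eq_zero_iff]

variable {K m n : Type*} [Field K] [Fintype m] [Fintype n]

theorem rank_fromBlocks_zero_zero (A : Matrix m m K) (D : Matrix n n K) :
    (fromBlocks A 0 0 D).rank = A.rank + D.rank := by
  classical
  let b := (Pi.basisFun K m).prod (Pi.basisFun K n)
  have h := LinearMap.toMatrix_prodMap (Pi.basisFun K m) (Pi.basisFun K n) A.toLin' D.toLin'
  simp only [LinearMap.toMatrix_eq_toMatrix', LinearMap.toMatrix'_toLin'] at h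
  rw [← h, rank_eq_finrank_range_toLin _ b b, toLin_toMatrix, LinearMap.range_prodMap,
    Submodule.finrank_prod]
  rfl

variable [DecidableEq m]

theorem rank_fromBlocks_of_invertible₁₁ (A : Matrix m m K) (B : Matrix m n K) (C : Matrix n m K)
    (D : Matrix n n K) [Invertible A] :
    (fromBlocks A B C D).rank = A.rank + (D - C * ⅟A * B).rank := by
  classical
  rw [fromBlocks_eq_of_invertible₁₁, rank_mul_eq_left_of_isUnit_det,
    rank_mul_eq_right_of_isUnit_det, rank_fromBlocks_zero_zero]
  all_goals simp

theorem rank_fromBlocks_one₁₁ (B : Matrix m n K) (C : Matrix n m K) (D : Matrix n n K) :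
    (fromBlocks 1 B C D).rank = Fintype.card m + (D - C * B).rank := by
  let := invertibleOne (α := Matrix m m K)
  rw [rank_fromBlocks_of_invertible₁₁, rank_one, invOf_one, Matrix.mul_one]

end Matrix

theorem rank_fromBlocks_le_iff
    (m n : ℕ) (P : Matrix (Fin n) (Fin m) ℝ) (Z : Matrix (Fin n) (Fin n) ℝ) :
    Matrix.rank (Matrix.fromBlocks (1 : Matrix (Fin m) (Fin m) ℝ) Pᵀ P Z) ≤ m ↔
      Z = P * Pᵀ := by
  rw [rank_fromBlocks_one₁₁, Fintype.card_fin, add_le_iff_nonpos_right, Nat.le_zero,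
    Matrix.rank_eq_zero_iff, sub_eq_zero]
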